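/- arXiv:1609.01811 — 3 statements merged into one kernel-verified Lean document; each statement's English description precedes it below -/
import Mathlib

section
/- Let F be a continuous univariate distribution function on ℝ with finite mean, and for a point set {x_1,…,x_n} ⊆ ℝ let F_n denote its empirical distribution function. Then E(F,F_n) = 2·D₂(F,F_n)², where D₂(F,F_n) = (∫ |F_n(x) − F(x)|² dx)^{1/2} is the L₂-discrepancy; consequently, a point set of size n minimizes the energy distance E(F,F_n) over all n-point sets if and only if it minimizes the L₂-discrepancy D₂(F,F_n). -/
/-!
Every distance is a layer-cake integral: `|a - b| = ∫ (𝟙{a ≤ t} - 𝟙{b ≤ t})² dt`. Inserting this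
into the three mean distances and applying Fubini turns the energy distance into
`∫ 2 E(g X - g Y)² - E(g X - g X')² - E(g Y - g Y')² dt` with `g = 𝟙_(-∞, t]`, `X ∼ F_n`, `Y ∼ F`.
Expanding the squares, the integrand is `2 (E g X - E g Y)² = 2 (F_n(t) - F(t))²`.
-/

open MeasureTheory Finset

/-- Energy distance between a univariate distribution `F` and the empirical
distribution of the point set `x_1, …, x_n`:
`E(F,F_n) = (2/n) Σᵢ E|xᵢ − Y| − (1/n²) Σᵢ Σⱼ |xᵢ − xⱼ| − E|Y − Y'|`. -/
noncomputable def energyDistE (F : Measure ℝ) {n : ℕ} (x : Fin n → ℝ) : ℝ :=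
  (2 / n) * ∑ i, ∫ y, |x i - y| ∂F
    - (1 / (n : ℝ) ^ 2) * ∑ i, ∑ j, |x i - x j|
    - ∫ y, (∫ y', |y - y'| ∂F) ∂F

/-- Empirical distribution function of the point set `x_1, …, x_n`. -/
noncomputable def edf {n : ℕ} (x : Fin n → ℝ) (t : ℝ) : ℝ :=
  ((Finset.univ.filter (fun i => x i ≤ t)).card : ℝ) / n

/-- The `L₂`-discrepancy `D₂(F,F_n) = (∫ |F_n(t) − F(t)|² dt)^{1/2}`. -/
noncomputable def L2disc (F : Measure ℝ) {n : ℕ} (x : Fin n → ℝ) : ℝ :=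
  Real.sqrt (∫ t, |edf x t - (F (Set.Iic t)).toReal| ^ 2)

lemma sq_sub_indicator_Iic (a b t : ℝ) :
    ((Set.Iic t).indicator (1 : ℝ → ℝ) a - (Set.Iic t).indicator 1 b) ^ 2
      = (Set.Ico (min a b) (max a b)).indicator 1 t := by
  by_cases ha : a ≤ t <;> by_cases hb : b ≤ t <;> simp [ha, hb, not_le.1]

lemma integral_sq_sub_indicator_Iic (a b : ℝ) :
    ∫ t, ((Set.Iic t).indicator (1 : ℝ → ℝ) a - (Set.Iic t).indicator 1 b) ^ 2 = |a - b| := by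
  simp only [sq_sub_indicator_Iic, integral_indicator_one measurableSet_Ico, Real.volume_real_Ico,
    max_sub_min_eq_abs, abs_nonneg, max_eq_left, abs_sub_comm]

lemma measurable_indicator_Iic_snd :
    Measurable fun p : ℝ × ℝ => (Set.Iic p.2).indicator (1 : ℝ → ℝ) p.1 :=
  measurable_one.indicator (measurableSet_le measurable_fst measurable_snd)

lemma integrable_abs_fst_sub_snd {μ ν : Measure ℝ} [IsFiniteMeasure μ] [IsFiniteMeasure ν]
    (hμ : Integrable id μ) (hν : Integrable id ν) :
    Integrable (fun p : ℝ × ℝ => |p.1 - p.2|) (μ.prod ν) :=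
  ((hμ.comp_fst ν).sub (hν.comp_snd μ)).abs

lemma integrable_sq_sub_indicator_Iic_prod {μ ν : Measure ℝ} [IsFiniteMeasure μ]
    [IsFiniteMeasure ν] (hμ : Integrable id μ) (hν : Integrable id ν) :
    Integrable (fun q : (ℝ × ℝ) × ℝ =>
      ((Set.Iic q.2).indicator (1 : ℝ → ℝ) q.1.1 - (Set.Iic q.2).indicator 1 q.1.2) ^ 2)
      ((μ.prod ν).prod volume) := by
  have hmeas : Measurable fun q : (ℝ × ℝ) × ℝ =>
      ((Set.Iic q.2).indicator (1 : ℝ → ℝ) q.1.1 - (Set.Iic q.2).indicator 1 q.1.2) ^ 2 :=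
    ((measurable_indicator_Iic_snd.comp (measurable_fst.fst.prodMk measurable_snd)).sub
      (measurable_indicator_Iic_snd.comp (measurable_fst.snd.prodMk measurable_snd))).pow_const 2
  refine (integrable_prod_iff hmeas.aestronglyMeasurable).2 ⟨?_, ?_⟩
  · refine .of_forall fun p => ?_
    simp only [sq_sub_indicator_Iic]
    exact (integrable_indicator_iff measurableSet_Ico).2 (integrableOn_const measure_Ico_lt_top.ne)
  · simp only [Real.norm_eq_abs, abs_sq, integral_sq_sub_indicator_Iic]
    exact integrable_abs_fst_sub_snd hμ hν

lemma integral_abs_fst_sub_snd {μ ν : Measure ℝ} [IsFiniteMeasure μ] [IsFiniteMeasure ν]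
    (hμ : Integrable id μ) (hν : Integrable id ν) :
    ∫ p, |p.1 - p.2| ∂μ.prod ν
      = ∫ t, ∫ p, ((Set.Iic t).indicator (1 : ℝ → ℝ) p.1 - (Set.Iic t).indicator 1 p.2) ^ 2
          ∂μ.prod ν := by
  simp_rw [← integral_sq_sub_indicator_Iic]
  exact integral_integral_swap (integrable_sq_sub_indicator_Iic_prod hμ hν)

lemma integrable_integral_sq_sub_indicator_Iic {μ ν : Measure ℝ} [IsFiniteMeasure μ]
    [IsFiniteMeasure ν] (hμ : Integrable id μ) (hν : Integrable id ν) :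
    Integrable (fun t => ∫ p, ((Set.Iic t).indicator (1 : ℝ → ℝ) p.1
      - (Set.Iic t).indicator 1 p.2) ^ 2 ∂μ.prod ν) :=
  (integrable_sq_sub_indicator_Iic_prod hμ hν).integral_prod_right

section Moments

variable {α : Type*} [MeasurableSpace α] {μ ν : Measure α} [IsProbabilityMeasure μ]
  [IsProbabilityMeasure ν] {g : α → ℝ}

lemma integral_sq_fst_sub_snd (hμ : MemLp g 2 μ) (hν : MemLp g 2 ν) :
    ∫ p, (g p.1 - g p.2) ^ 2 ∂μ.prod ν
      = ∫ a, g a ^ 2 ∂μ + ∫ a, g a ^ 2 ∂ν - 2 * ((∫ a, g a ∂μ) * ∫ a, g a ∂ν) := by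
  have h1 : Integrable (fun p : α × α => g p.1 ^ 2) (μ.prod ν) := hμ.integrable_sq.comp_fst ν
  have h2 : Integrable (fun p : α × α => g p.2 ^ 2) (μ.prod ν) := hν.integrable_sq.comp_snd μ
  have h12 : Integrable (fun p : α × α => g p.1 * g p.2) (μ.prod ν) :=
    (hμ.integrable one_le_two).mul_prod (hν.integrable one_le_two)
  simp_rw [sub_sq', mul_assoc]
  rw [integral_sub (f := fun p => g p.1 ^ 2 + g p.2 ^ 2) (h1.add h2) (h12.const_mul 2),
    integral_add h1 h2, integral_const_mul, integral_fun_fst (fun a => g a ^ 2),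
    integral_fun_snd (fun a => g a ^ 2), integral_prod_mul g g]
  simp

lemma energy_sq_sub_eq_two_mul_sq_integral_sub (hμ : MemLp g 2 μ) (hν : MemLp g 2 ν) :
    2 * ∫ p, (g p.1 - g p.2) ^ 2 ∂μ.prod ν - ∫ p, (g p.1 - g p.2) ^ 2 ∂μ.prod μ
        - ∫ p, (g p.1 - g p.2) ^ 2 ∂ν.prod ν
      = 2 * (∫ a, g a ∂μ - ∫ a, g a ∂ν) ^ 2 := by
  rw [integral_sq_fst_sub_snd hμ hν, integral_sq_fst_sub_snd hμ hμ, integral_sq_fst_sub_snd hν hν]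
  ring

end Moments

noncomputable def energyDistance (μ ν : Measure ℝ) : ℝ :=
  2 * ∫ p, |p.1 - p.2| ∂μ.prod ν - ∫ p, |p.1 - p.2| ∂μ.prod μ - ∫ p, |p.1 - p.2| ∂ν.prod ν

theorem energyDistance_eq_two_mul_integral_sq_cdf_sub {μ ν : Measure ℝ} [IsProbabilityMeasure μ]
    [IsProbabilityMeasure ν] (hμ : Integrable id μ) (hν : Integrable id ν) :
    energyDistance μ ν = 2 * ∫ t, (μ.real (Set.Iic t) - ν.real (Set.Iic t)) ^ 2 := by
  have hμν := integrable_integral_sq_sub_indicator_Iic hμ hν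
  have hμμ := integrable_integral_sq_sub_indicator_Iic hμ hμ
  have hνν := integrable_integral_sq_sub_indicator_Iic hν hν
  rw [energyDistance, integral_abs_fst_sub_snd hμ hν, integral_abs_fst_sub_snd hμ hμ,
    integral_abs_fst_sub_snd hν hν, ← integral_const_mul, ← integral_sub, ← integral_sub,
    ← integral_const_mul]
  rotate_left
  · exact (hμν.const_mul 2).sub hμμ
  · exact hνν
  · exact hμν.const_mul 2
  · exact hμμ
  refine integral_congr_ae (.of_forall fun t => ?_)
  have hmemLp {ρ : Measure ℝ} [IsFiniteMeasure ρ] : MemLp ((Set.Iic t).indicator 1) 2 ρ :=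
    (memLp_const (1 : ℝ)).indicator measurableSet_Iic
  simpa only [integral_indicator_one measurableSet_Iic] using
    energy_sq_sub_eq_two_mul_sq_integral_sub (g := (Set.Iic t).indicator 1) hmemLp hmemLp

section Empirical

open scoped ENNReal

variable {α : Type*} [MeasurableSpace α] {n : ℕ}

noncomputable def empiricalMeasure (x : Fin n → α) : Measure α :=
  (n : ℝ≥0∞)⁻¹ • ∑ i, Measure.dirac (x i)

lemma isProbabilityMeasure_empiricalMeasure (hn : 0 < n) (x : Fin n → α) :
    IsProbabilityMeasure (empiricalMeasure x) := by
  constructor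
  simp [empiricalMeasure,
    ENNReal.inv_mul_cancel (Nat.cast_ne_zero.2 hn.ne') (ENNReal.natCast_ne_top n)]

lemma integrable_empiricalMeasure [MeasurableSingletonClass α] (x : Fin n → α) (f : α → ℝ) :
    Integrable f (empiricalMeasure x) := by
  obtain rfl | hn := eq_or_ne n 0
  · simp [empiricalMeasure]
  exact (integrable_finsetSum_measure.2 fun _ _ => integrable_dirac enorm_lt_top).smul_measure
    (ENNReal.inv_ne_top.2 (Nat.cast_ne_zero.2 hn))

lemma integral_empiricalMeasure [MeasurableSingletonClass α] (x : Fin n → α) (f : α → ℝ) :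
    ∫ a, f a ∂empiricalMeasure x = (∑ i, f (x i)) / n := by
  rw [empiricalMeasure, integral_smul_measure,
    integral_finsetSum_measure fun _ _ => integrable_dirac enorm_lt_top]
  simp [integral_dirac, div_eq_inv_mul]

end Empirical

lemma empiricalMeasure_real_Iic {n : ℕ} (x : Fin n → ℝ) (t : ℝ) :
    (empiricalMeasure x).real (Set.Iic t) = edf x t := by
  rw [← integral_indicator_one measurableSet_Iic, integral_empiricalMeasure, edf]
  simp [Set.indicator_apply]

lemma energyDistE_eq_energyDistance (F : Measure ℝ) [IsProbabilityMeasure F]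
    (hF : Integrable id F) {n : ℕ} (hn : 0 < n) (x : Fin n → ℝ) :
    energyDistE F x = energyDistance (empiricalMeasure x) F := by
  have := isProbabilityMeasure_empiricalMeasure hn x
  have hx : Integrable id (empiricalMeasure x) := integrable_empiricalMeasure x id
  rw [energyDistance, integral_prod _ (integrable_abs_fst_sub_snd hx hF),
    integral_prod _ (integrable_abs_fst_sub_snd hx hx),
    integral_prod _ (integrable_abs_fst_sub_snd hF hF)]
  have hn0 : (n : ℝ) ≠ 0 := Nat.cast_ne_zero.2 hn.ne'
  simp only [integral_empiricalMeasure, energyDistE, ← Finset.sum_div]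
  field_simp

theorem energyDistE_eq_two_mul_sq_L2disc_general (F : Measure ℝ) [IsProbabilityMeasure F]
    (hmean : Integrable (fun y => |y|) F)
    (n : ℕ) (hn : 0 < n) :
    (∀ x : Fin n → ℝ, energyDistE F x = 2 * (L2disc F x) ^ 2) ∧
    (∀ ξ : Fin n → ℝ,
      (∀ x : Fin n → ℝ, energyDistE F ξ ≤ energyDistE F x) ↔
      (∀ x : Fin n → ℝ, L2disc F ξ ≤ L2disc F x)) := by
  have hF : Integrable id F := (integrable_norm_iff aestronglyMeasurable_id).1 hmean
  have key (x : Fin n → ℝ) : energyDistE F x = 2 * L2disc F x ^ 2 := by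
    have := isProbabilityMeasure_empiricalMeasure hn x
    rw [energyDistE_eq_energyDistance F hF hn, energyDistance_eq_two_mul_integral_sq_cdf_sub
      (integrable_empiricalMeasure x id) hF, L2disc,
      Real.sq_sqrt (integral_nonneg fun _ => by positivity)]
    simp_rw [empiricalMeasure_real_Iic, measureReal_def, sq_abs]
  have hD (x : Fin n → ℝ) : 0 ≤ L2disc F x := Real.sqrt_nonneg _
  refine ⟨key, fun ξ => forall_congr' fun x => ?_⟩
  rw [key, key, mul_le_mul_iff_right₀ two_pos, pow_le_pow_iff_left₀ (hD ξ) (hD x) two_ne_zero]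

/-- for a continuous univariate distribution `F` with finite mean,
`E(F,F_n) = 2·D₂(F,F_n)²`, and consequently a point set minimizes the energy
distance over all `n`-point sets iff it minimizes the `L₂`-discrepancy. -/
theorem energyDistE_eq_two_mul_sq_L2disc (F : Measure ℝ) [IsProbabilityMeasure F]
    (hcont : ∀ t : ℝ, F {t} = 0) (hmean : Integrable (fun y => |y|) F)
    (n : ℕ) (hn : 0 < n) :
    (∀ x : Fin n → ℝ, energyDistE F x = 2 * (L2disc F x) ^ 2) ∧
    (∀ ξ : Fin n → ℝ,
      (∀ x : Fin n → ℝ, energyDistE F ξ ≤ energyDistE F x) ↔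
      (∀ x : Fin n → ℝ, L2disc F ξ ≤ L2disc F x)) :=
  energyDistE_eq_two_mul_sq_L2disc_general F hmean n hn
end

section
/- The function Φ(x) = −‖x‖₂ on ℝ^p is conditionally positive definite of order 1: for any pairwise distinct points x_1,…,x_N ∈ ℝ^p and any nonzero vector ζ ∈ ℝ^N with Σ_{j=1}^N ζ_j = 0, the quadratic form −Σ_{j=1}^N Σ_{k=1}^N ζ_j ζ_k ‖x_j − x_k‖₂ is strictly positive. -/
/-!
For `r ≥ 0`, substituting `s ↦ s / r²` gives `∫₀^∞ (1 - e^{-s r²}) s^{-3/2} ds = C r` with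
`C = ∫₀^∞ (1 - e^{-s}) s^{-3/2} ds > 0`. Since `∑ ζⱼ = 0`, the constant term drops out of the
double sum: `-C ∑ ζⱼ ζₖ ‖xⱼ - xₖ‖ = ∫₀^∞ (∑ ζⱼ ζₖ e^{-s ‖xⱼ - xₖ‖²}) s^{-3/2} ds`, so it suffices
that the Gaussian kernel is strictly positive definite. Writing
`e^{-s ‖xⱼ - xₖ‖²} = e^{-s ‖xⱼ‖²} e^{-s ‖xₖ‖²} e^{2s ⟪xⱼ, xₖ⟫}` and expanding the last factor, its
quadratic form becomes `∑ₙ (2s)ⁿ / n! ∑_f (∑ⱼ ηⱼ ∏ₗ xⱼ (f l))²`. If every term vanished, `η` would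
annihilate the evaluations at the `xⱼ` of all polynomials, which is impossible for distinct points:
`∏_{k ≠ j} ‖y - xₖ‖²` vanishes at every `xₖ` but `xⱼ`.
-/

open Finset Real Function MeasureTheory Set

lemma setIntegral_Ioi_pos {f : ℝ → ℝ} {a : ℝ} (hf : IntegrableOn f (Ioi a))
    (hpos : ∀ s ∈ Ioi a, 0 < f s) : 0 < ∫ s in Ioi a, f s := by
  have hsupp : Ioi a ⊆ support f := fun s hs => (hpos s hs).ne'
  rw [setIntegral_pos_iff_support_of_nonneg_ae
    ((ae_restrict_iff' measurableSet_Ioi).2 (.of_forall fun s hs => (hpos s hs).le)) hf,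
    inter_eq_right.2 hsupp, Real.volume_Ioi]
  exact ENNReal.zero_lt_top

lemma integrableOn_one_sub_exp_neg_mul_rpow :
    IntegrableOn (fun s => (1 - exp (-s)) * s ^ (-(3 / 2 : ℝ))) (Ioi 0) := by
  have hcont : ContinuousOn (fun s : ℝ => (1 - exp (-s)) * s ^ (-(3 / 2 : ℝ))) (Ioi 0) :=
    (by fun_prop : Continuous fun s : ℝ => 1 - exp (-s)).continuousOn.mul
      (continuousOn_id.rpow_const fun s hs => Or.inl (ne_of_gt hs))
  rw [← Ioc_union_Ioi_eq_Ioi zero_le_one]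
  refine IntegrableOn.union ?_ ?_
  · have hbound : IntegrableOn (fun s : ℝ => s ^ (-(1 / 2 : ℝ))) (Ioc 0 1) :=
      (intervalIntegrable_iff_integrableOn_Ioc_of_le zero_le_one).1
        (intervalIntegral.intervalIntegrable_rpow' (by norm_num))
    refine hbound.mono' ((hcont.mono Ioc_subset_Ioi_self).aestronglyMeasurable measurableSet_Ioc)
      ((ae_restrict_iff' measurableSet_Ioc).2 (.of_forall fun s hs => ?_))
    have h1 : 0 ≤ 1 - exp (-s) := sub_nonneg.2 (exp_le_one_iff.2 (by linarith [hs.1]))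
    have h2 : 1 - exp (-s) ≤ s := by linarith [add_one_le_exp (-s)]
    rw [norm_of_nonneg (mul_nonneg h1 (rpow_nonneg hs.1.le _))]
    calc (1 - exp (-s)) * s ^ (-(3 / 2 : ℝ)) ≤ s * s ^ (-(3 / 2 : ℝ)) :=
          mul_le_mul_of_nonneg_right h2 (rpow_nonneg hs.1.le _)
      _ = s ^ (-(1 / 2 : ℝ)) := by
          rw [← rpow_one_add' hs.1.le (by norm_num)]; norm_num
  · refine (integrableOn_Ioi_rpow_of_lt (by norm_num : -(3 / 2 : ℝ) < -1) one_pos).mono'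
      ((hcont.mono (Ioi_subset_Ioi zero_le_one)).aestronglyMeasurable measurableSet_Ioi)
      ((ae_restrict_iff' measurableSet_Ioi).2 (.of_forall fun s hs => ?_))
    have hs0 : (0 : ℝ) < s := zero_lt_one.trans hs
    have h1 : 0 ≤ 1 - exp (-s) := sub_nonneg.2 (exp_le_one_iff.2 (by linarith))
    rw [norm_of_nonneg (mul_nonneg h1 (rpow_nonneg hs0.le _))]
    exact mul_le_of_le_one_left (rpow_nonneg hs0.le _) (by linarith [exp_pos (-s)])

noncomputable def normIntegralConst : ℝ := ∫ s in Ioi (0 : ℝ), (1 - exp (-s)) * s ^ (-(3 / 2 : ℝ))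

lemma normIntegralConst_pos : 0 < normIntegralConst :=
  setIntegral_Ioi_pos integrableOn_one_sub_exp_neg_mul_rpow fun s (hs : 0 < s) =>
    mul_pos (sub_pos.2 (exp_lt_one_iff.2 (neg_lt_zero.2 hs))) (rpow_pos_of_pos hs _)

lemma one_sub_exp_neg_mul_mul_rpow_eq {c s : ℝ} (hc : 0 < c) (hs : 0 < s) :
    (1 - exp (-(s * c))) * s ^ (-(3 / 2 : ℝ)) =
      c ^ (3 / 2 : ℝ) * ((1 - exp (-(c * s))) * (c * s) ^ (-(3 / 2 : ℝ))) := by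
  rw [mul_rpow hc.le hs.le, rpow_neg hc.le, mul_comm c s]
  field_simp

lemma integrableOn_one_sub_exp_neg_mul_sq_mul_rpow (a : ℝ) :
    IntegrableOn (fun s => (1 - exp (-(s * a ^ 2))) * s ^ (-(3 / 2 : ℝ))) (Ioi 0) := by
  rcases eq_or_ne a 0 with rfl | ha
  · simp
  have hc : 0 < a ^ 2 := by positivity
  refine IntegrableOn.congr_fun (f := fun s => (a ^ 2) ^ (3 / 2 : ℝ) *
      ((1 - exp (-(a ^ 2 * s))) * (a ^ 2 * s) ^ (-(3 / 2 : ℝ)))) ?_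
    (fun s hs => (one_sub_exp_neg_mul_mul_rpow_eq hc hs).symm) measurableSet_Ioi
  refine Integrable.const_mul ?_ _
  exact (integrableOn_Ioi_comp_mul_left_iff
    (fun s => (1 - exp (-s)) * s ^ (-(3 / 2 : ℝ))) 0 hc).2
    (by simpa using integrableOn_one_sub_exp_neg_mul_rpow)

lemma integral_one_sub_exp_neg_mul_sq_mul_rpow {a : ℝ} (ha : 0 ≤ a) :
    ∫ s in Ioi (0 : ℝ), (1 - exp (-(s * a ^ 2))) * s ^ (-(3 / 2 : ℝ)) = normIntegralConst * a := by
  rcases ha.eq_or_lt with rfl | ha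
  · simp
  have hc : 0 < a ^ 2 := by positivity
  rw [setIntegral_congr_fun measurableSet_Ioi fun s hs => one_sub_exp_neg_mul_mul_rpow_eq hc hs,
    integral_const_mul,
    integral_comp_mul_left_Ioi (fun s => (1 - exp (-s)) * s ^ (-(3 / 2 : ℝ))) 0 hc,
    mul_zero, smul_eq_mul, ← mul_assoc, ← rpow_neg_one, ← rpow_add hc, ← normIntegralConst,
    show (3 / 2 : ℝ) + -1 = 1 / 2 by norm_num, ← sqrt_eq_rpow, sqrt_sq ha.le, mul_comm]

lemma sum_mul_lt_zero_of_sum_mul_exp_pos {κ : Type*} [Fintype κ] {w a : κ → ℝ}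
    (ha : ∀ i, 0 ≤ a i) (hw : ∑ i, w i = 0)
    (hpos : ∀ s > 0, 0 < ∑ i, w i * exp (-(s * a i ^ 2))) :
    ∑ i, w i * a i < 0 := by
  set G : ℝ → ℝ := fun s => ∑ i, w i * ((1 - exp (-(s * a i ^ 2))) * s ^ (-(3 / 2 : ℝ)))
  have hint (i : κ) : IntegrableOn
      (fun s => w i * ((1 - exp (-(s * a i ^ 2))) * s ^ (-(3 / 2 : ℝ)))) (Ioi 0) :=
    (integrableOn_one_sub_exp_neg_mul_sq_mul_rpow (a i)).const_mul _
  have hG_int : IntegrableOn G (Ioi 0) := integrable_finsetSum _ fun i _ => hint i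
  have hG_integral : ∫ s in Ioi (0 : ℝ), G s = normIntegralConst * ∑ i, w i * a i := by
    rw [integral_finsetSum _ fun i _ => hint i, mul_sum]
    refine sum_congr rfl fun i _ => ?_
    rw [integral_const_mul, integral_one_sub_exp_neg_mul_sq_mul_rpow (ha i)]
    ring
  have hG_eq (s : ℝ) : G s = -((∑ i, w i * exp (-(s * a i ^ 2))) * s ^ (-(3 / 2 : ℝ))) := by
    simp only [G, mul_sub, mul_one, ← mul_assoc, sum_sub_distrib, ← sum_mul, hw]
    ring
  have hG_neg : 0 < ∫ s in Ioi (0 : ℝ), -G s :=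
    setIntegral_Ioi_pos hG_int.neg fun s (hs : 0 < s) => by
      rw [hG_eq, neg_neg]; exact mul_pos (hpos s hs) (rpow_pos_of_pos hs _)
  rw [integral_neg, hG_integral, neg_pos] at hG_neg
  exact neg_of_mul_neg_right hG_neg normIntegralConst_pos.le

section GaussianKernel

variable {ι d : Type*} [Fintype ι] [Fintype d]

omit [Fintype d] in
lemma sum_mul_eval_eq_zero_of_sum_mul_prod_eq_zero (x : ι → EuclideanSpace ℝ d) (η : ι → ℝ)
    (h : ∀ (n : ℕ) (f : Fin n → d), ∑ j, η j * ∏ l, x j (f l) = 0) (P : MvPolynomial d ℝ) :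
    ∑ j, η j * MvPolynomial.eval (x j) P = 0 := by
  -- an extra monomial factor lets the `mul_X` step absorb `X i` into it
  suffices H : ∀ (n : ℕ) (f : Fin n → d),
      ∑ j, η j * (MvPolynomial.eval (x j) P * ∏ l, x j (f l)) = 0 by
    simpa using H 0 Fin.elim0
  induction P using MvPolynomial.induction_on with
  | C a =>
    intro n f
    simp_rw [MvPolynomial.eval_C, mul_left_comm _ a, ← mul_sum, h, mul_zero]
  | add P Q hP hQ =>
    intro n f
    simp_rw [map_add, add_mul, mul_add, sum_add_distrib, hP, hQ, add_zero]
  | mul_X P i hP =>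
    intro n f
    simpa [Fin.prod_univ_succ, mul_assoc] using hP (n + 1) (Fin.cons i f)

lemma eq_zero_of_sum_mul_eval_eq_zero [DecidableEq ι] {x : ι → EuclideanSpace ℝ d}
    (hx : Injective x) (η : ι → ℝ)
    (h : ∀ P : MvPolynomial d ℝ, ∑ j, η j * MvPolynomial.eval (x j) P = 0) :
    η = 0 := by
  ext j₀
  set P : MvPolynomial d ℝ :=
    ∏ k ∈ univ.erase j₀, ∑ i, (MvPolynomial.X i - MvPolynomial.C (x k i)) ^ 2
  have hP (y : EuclideanSpace ℝ d) :
      MvPolynomial.eval y P = ∏ k ∈ univ.erase j₀, ‖y - x k‖ ^ 2 := by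
    simp [P, EuclideanSpace.norm_sq_eq]
  have hsum := h P
  simp_rw [hP] at hsum
  rw [sum_eq_single j₀ (fun j _ hj => by simp [prod_eq_zero (mem_erase.2 ⟨hj, mem_univ j⟩)])
    (by simp)] at hsum
  refine (mul_eq_zero.1 hsum).resolve_right (prod_ne_zero_iff.2 fun k hk => ?_)
  exact pow_ne_zero 2 (norm_ne_zero_iff.2 (sub_ne_zero.2 (hx.ne (mem_erase.1 hk).1.symm)))

lemma sum_sum_mul_inner_pow_eq_sum_sq (x : ι → EuclideanSpace ℝ d) (η : ι → ℝ) (n : ℕ) :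
    ∑ j, ∑ k, η j * η k * inner ℝ (x j) (x k) ^ n =
      ∑ f : Fin n → d, (∑ j, η j * ∏ l, x j (f l)) ^ 2 := by
  have hpow : ∀ j k, inner ℝ (x j) (x k) ^ n =
      ∑ f : Fin n → d, (∏ l, x j (f l)) * ∏ l, x k (f l) := by
    intro j k
    simp_rw [PiLp.inner_apply, RCLike.inner_apply, conj_trivial, Fintype.sum_pow,
      ← prod_mul_distrib, mul_comm]
  simp_rw [hpow, sq, sum_mul_sum, mul_sum]
  conv_rhs => rw [sum_comm]
  refine sum_congr rfl fun j _ => ?_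
  conv_rhs => rw [sum_comm]
  exact sum_congr rfl fun k _ => sum_congr rfl fun f _ => by ring

lemma sum_sum_mul_exp_mul_inner_pos {x : ι → EuclideanSpace ℝ d} (hx : Injective x) {η : ι → ℝ}
    (hη : η ≠ 0) {c : ℝ} (hc : 0 < c) :
    0 < ∑ j, ∑ k, η j * η k * exp (c * inner ℝ (x j) (x k)) := by
  have hseries : HasSum (fun n : ℕ => c ^ n / n.factorial *
      ∑ f : Fin n → d, (∑ j, η j * ∏ l, x j (f l)) ^ 2)
      (∑ j, ∑ k, η j * η k * exp (c * inner ℝ (x j) (x k))) := by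
    simp_rw [← sum_sum_mul_inner_pow_eq_sum_sq, mul_sum]
    refine hasSum_sum fun j _ => hasSum_sum fun k _ => ?_
    convert! (NormedSpace.expSeries_div_hasSum_exp (c * inner ℝ (x j) (x k))).mul_left (η j * η k)
      using 1
    · ext n; ring
    · rw [exp_eq_exp_ℝ]
  have hterm_nonneg (n : ℕ) : 0 ≤ c ^ n / n.factorial *
      ∑ f : Fin n → d, (∑ j, η j * ∏ l, x j (f l)) ^ 2 := by positivity
  obtain ⟨n, hn⟩ : ∃ n : ℕ, 0 < c ^ n / n.factorial *
      ∑ f : Fin n → d, (∑ j, η j * ∏ l, x j (f l)) ^ 2 := by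
    by_contra! hzero
    classical
    refine hη (eq_zero_of_sum_mul_eval_eq_zero hx η
      (sum_mul_eval_eq_zero_of_sum_mul_prod_eq_zero x η fun n f => ?_))
    have hsq := le_antisymm (hzero n) (hterm_nonneg n)
    rw [mul_eq_zero, sum_eq_zero_iff_of_nonneg fun _ _ => sq_nonneg _] at hsq
    exact pow_eq_zero_iff two_ne_zero |>.1 <|
      hsq.resolve_left (by positivity) f (mem_univ f)
  exact hasSum_lt hterm_nonneg hn hasSum_zero hseries

lemma sum_sum_mul_exp_neg_mul_norm_sub_sq_pos {x : ι → EuclideanSpace ℝ d} (hx : Injective x)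
    {ζ : ι → ℝ} (hζ : ζ ≠ 0) {s : ℝ} (hs : 0 < s) :
    0 < ∑ j, ∑ k, ζ j * ζ k * exp (-(s * ‖x j - x k‖ ^ 2)) := by
  set η : ι → ℝ := fun j => ζ j * exp (-(s * ‖x j‖ ^ 2))
  have hη : η ≠ 0 := fun h => hζ <| funext fun j => by
    simpa [η, (exp_pos _).ne'] using congrFun h j
  convert sum_sum_mul_exp_mul_inner_pos hx hη (mul_pos two_pos hs) using 3 with j _ k _
  have hexponent : -(s * ‖x j - x k‖ ^ 2) =
      -(s * ‖x j‖ ^ 2) + -(s * ‖x k‖ ^ 2) + 2 * s * inner ℝ (x j) (x k) := by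
    rw [norm_sub_sq_real]; ring
  rw [hexponent, exp_add, exp_add]
  ring

end GaussianKernel

/-- the function `Φ(x) = −‖x‖₂` on `ℝ^p` is conditionally positive
definite of order 1: for pairwise distinct points `x_1, …, x_N` and any nonzero
vector `ζ` with `Σⱼ ζⱼ = 0`, the quadratic form
`Σⱼ Σₖ ζⱼ ζₖ Φ(xⱼ − xₖ) = −Σⱼ Σₖ ζⱼ ζₖ ‖xⱼ − xₖ‖₂` is strictly positive. -/
theorem neg_norm_cond_pos_def {p N : ℕ}
    (x : Fin N → EuclideanSpace ℝ (Fin p)) (hx : Function.Injective x)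
    (ζ : Fin N → ℝ) (hζ : ζ ≠ 0) (hsum : ∑ j, ζ j = 0) :
    0 < -∑ j, ∑ k, ζ j * ζ k * ‖x j - x k‖ := by
  have hw : ∑ jk : Fin N × Fin N, ζ jk.1 * ζ jk.2 = 0 := by
    rw [Fintype.sum_prod_type, ← sum_mul_sum, hsum, zero_mul]
  have key := sum_mul_lt_zero_of_sum_mul_exp_pos
    (fun jk : Fin N × Fin N => norm_nonneg (x jk.1 - x jk.2)) hw fun s hs => by
      simpa only [Fintype.sum_prod_type] using sum_sum_mul_exp_neg_mul_norm_sub_sq_pos hx hζ hs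
  exact neg_pos.2 (by simpa only [Fintype.sum_prod_type] using key)
end

section
/- Let (χ_k²)_{k≥1} be i.i.d. chi-squared random variables with 1 degree of freedom, and let (λ_k)_{k≥1} be a nonincreasing sequence of nonnegative reals with Σ_{k=1}^∞ λ_k^{1/α} < ∞ for some α > 1. Set W_∞ = Σ_{k=1}^∞ λ_k χ_k² and d = α·(2c)^{1/α}·Σ_{k=1}^∞ λ_k^{1/α}, where c = 2^α·b^{α/(α−1)} and b = α·2^{1/α−1}·Σ_{k=1}^∞ λ_k^{1/α}. Then there exists x₀ > 0 such that for all 0 < x ≤ x₀, P(W_∞ ≤ x) ≥ (1/4)·exp{−d·x^{−1/(α−1)}}. -/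
/-!
For `t ≥ 0` the Laplace transform of `λ χ²` is `(1 + 2tλ)^{-1/2}`, and
`1 + u ≤ exp (α u^{1/α})` for `α ≥ 1`, so by independence every partial sum `W_n` of `W_∞`
satisfies `E exp(-t W_n) ≥ exp(-(α/2) (2t)^{1/α} S)`. As `W_n ≥ 0`, also
`E exp(-t W_n) ≤ P(W_n ≤ x) + exp(-t x)`, and the events `{W_n ≤ x}` decrease to a subset
of `{W_∞ ≤ x}`. The choice `t = c x^{-α/(α-1)}` turns the two exponents into
`(d/2) x^{-1/(α-1)}` and `c x^{-1/(α-1)}`; since `d = 2^{2-α} c < 2c`, the second term is at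
most half the first once `x` is small, which leaves
`(1/2) exp(-(d/2) x^{-1/(α-1)}) ≥ (1/4) exp(-d x^{-1/(α-1)})`.
-/

open MeasureTheory ProbabilityTheory Filter Real Topology

theorem one_add_le_exp_mul_rpow_one_div {α u : ℝ} (hα : 1 ≤ α) (hu : 0 ≤ u) :
    1 + u ≤ exp (α * u ^ (1 / α)) := by
  set v := u ^ (1 / α)
  have hv : 0 ≤ v := rpow_nonneg hu _
  have huv : u = v ^ α := by
    rw [← rpow_mul hu, one_div_mul_cancel (by positivity), rpow_one]
  calc 1 + u = 1 ^ α + v ^ α := by rw [one_rpow, huv]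
    _ ≤ (1 + v) ^ α := add_rpow_le_rpow_add zero_le_one hv hα
    _ ≤ exp v ^ α := by gcongr; linarith [add_one_le_exp v]
    _ = exp (α * v) := by rw [← exp_mul, mul_comm]

theorem exp_neg_le_inv_sqrt_one_add {α u : ℝ} (hα : 1 ≤ α) (hu : 0 ≤ u) :
    exp (-(α / 2 * u ^ (1 / α))) ≤ (√(1 + u))⁻¹ := by
  rw [exp_neg]
  gcongr
  calc √(1 + u) ≤ √(exp (α * u ^ (1 / α))) :=
        sqrt_le_sqrt (one_add_le_exp_mul_rpow_one_div hα hu)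
    _ = exp (α / 2 * u ^ (1 / α)) := by
        rw [sqrt_eq_iff_mul_self_eq_of_pos (exp_pos _), ← exp_add]
        ring_nf

theorem quarter_mul_exp_neg_two_mul_le {p q : ℝ} (hp : 0 ≤ p) (hpq : p + log 2 ≤ q) :
    1 / 4 * exp (-(2 * p)) ≤ exp (-p) - exp (-q) := by
  have hq : exp (-q) ≤ exp (-p) / 2 := by
    rw [le_div_iff₀ two_pos, ← exp_log two_pos, ← exp_add]
    gcongr; linarith
  have hp1 : exp (-p) ≤ 1 := exp_le_one_iff.2 (by linarith)
  have : exp (-(2 * p)) = exp (-p) * exp (-p) := by rw [← exp_add]; ring_nf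
  nlinarith [exp_pos (-p)]

-- For `s ≤ -1/2` both sides are junk `0`: the integrand is not integrable and `√` of a
-- nonpositive number is `0`.
theorem integral_exp_neg_mul_sq_gaussianReal (s : ℝ) :
    ∫ u, exp (-(s * u ^ 2)) ∂gaussianReal 0 1 = (√(1 + 2 * s))⁻¹ := by
  have hpdf (u : ℝ) : gaussianPDFReal 0 1 u • exp (-(s * u ^ 2))
      = (√(2 * π))⁻¹ * exp (-(s + 1 / 2) * u ^ 2) := by
    simp only [gaussianPDFReal, NNReal.coe_one, mul_one, sub_zero, smul_eq_mul, mul_assoc,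
      ← exp_add]
    ring_nf
  simp_rw [integral_gaussianReal_eq_integral_smul one_ne_zero, hpdf]
  rw [integral_const_mul, integral_gaussian, ← sqrt_inv, ← sqrt_mul (by positivity),
    ← sqrt_inv]
  congr 1
  field_simp
  ring

section

variable {Ω : Type _} {mΩ : MeasurableSpace Ω} {μ : Measure Ω}

theorem mgf_neg_of_map_eq_map_sq_gaussianReal {χ : Ω → ℝ} (hχ : AEMeasurable χ μ)
    (hlaw : μ.map χ = (gaussianReal 0 1).map (· ^ 2)) (s : ℝ) :
    mgf χ μ (-s) = (√(1 + 2 * s))⁻¹ := by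
  rw [← mgf_id_map hχ, hlaw, mgf_id_map (by fun_prop), mgf,
    ← integral_exp_neg_mul_sq_gaussianReal s]
  simp only [neg_mul]

theorem ae_nonneg_of_map_eq_map_sq_gaussianReal {χ : Ω → ℝ} (hχ : AEMeasurable χ μ)
    (hlaw : μ.map χ = (gaussianReal 0 1).map (· ^ 2)) : ∀ᵐ ω ∂μ, 0 ≤ χ ω := by
  refine ae_of_ae_map hχ ?_
  rw [hlaw, ae_map_iff (by fun_prop) measurableSet_Ici]
  exact ae_of_all _ fun u => sq_nonneg u

theorem mgf_neg_le_measureReal_le_add_exp [IsProbabilityMeasure μ] {Y : Ω → ℝ}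
    (hY : Measurable Y) (hY0 : ∀ᵐ ω ∂μ, 0 ≤ Y ω) {t : ℝ} (ht : 0 ≤ t) (x : ℝ) :
    mgf Y μ (-t) ≤ μ.real {ω | Y ω ≤ x} + exp (-(t * x)) := by
  have hE : MeasurableSet {ω | Y ω ≤ x} := measurableSet_le hY measurable_const
  have hle : ∀ᵐ ω ∂μ,
      exp (-t * Y ω) ≤ {ω | Y ω ≤ x}.indicator 1 ω + exp (-(t * x)) := by
    filter_upwards [hY0] with ω hω
    by_cases hx : Y ω ≤ x
    · have : exp (-t * Y ω) ≤ 1 := exp_le_one_iff.2 (by nlinarith)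
      simp only [Set.indicator_of_mem (show ω ∈ {ω | Y ω ≤ x} from hx), Pi.one_apply]
      linarith [exp_pos (-(t * x))]
    · simp only [Set.indicator_of_notMem (show ω ∉ {ω | Y ω ≤ x} from hx), zero_add]
      exact exp_le_exp.2 (by nlinarith)
  have hint : Integrable (fun ω => {ω | Y ω ≤ x}.indicator 1 ω + exp (-(t * x))) μ :=
    ((integrable_const 1).indicator hE).add (integrable_const _)
  calc mgf Y μ (-t) ≤ ∫ ω, ({ω | Y ω ≤ x}.indicator 1 ω + exp (-(t * x))) ∂μ :=
        integral_mono_of_nonneg (ae_of_all _ fun _ => (exp_pos _).le) hint hle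
    _ = μ.real {ω | Y ω ≤ x} + exp (-(t * x)) := by
        rw [integral_add ((integrable_const 1).indicator hE) (integrable_const _),
          integral_indicator_one hE]
        simp

theorem le_measure_tsum_le_of_le_measure_sum_range_le [IsFiniteMeasure μ]
    {f : ℕ → Ω → ℝ} (hf : ∀ k, Measurable (f k)) (hf0 : ∀ᵐ ω ∂μ, ∀ k, 0 ≤ f k ω)
    {x : ℝ} {β : ENNReal}
    (hβ : ∀ n, β ≤ μ {ω | ∑ k ∈ Finset.range n, f k ω ≤ x}) :
    β ≤ μ {ω | ∑' k, f k ω ≤ x} := by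
  have hanti : ∀ᵐ ω ∂μ, Antitone (ω ∈ {ω | ∑ k ∈ Finset.range ·, f k ω ≤ x}) := by
    filter_upwards [hf0] with ω hω m n hmn hn
    exact (Finset.sum_le_sum_of_subset_of_nonneg (Finset.range_mono hmn)
      fun k _ _ => hω k).trans hn
  have hsub :
      (⋂ n, {ω | ∑ k ∈ Finset.range n, f k ω ≤ x}) ≤ᵐ[μ] {ω | ∑' k, f k ω ≤ x} := by
    filter_upwards [hf0] with ω hω (hmem : ω ∈ ⋂ n, _)
    exact Real.tsum_le_of_sum_range_le hω fun n => Set.mem_iInter.1 hmem n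
  calc β ≤ ⨅ n, μ {ω | ∑ k ∈ Finset.range n, f k ω ≤ x} := le_iInf hβ
    _ = μ (⋂ n, {ω | ∑ k ∈ Finset.range n, f k ω ≤ x}) :=
        (measure_iInter_of_ae_antitone hanti (fun n => (measurableSet_le
          (Finset.measurable_sum _ fun k _ => hf k) measurable_const).nullMeasurableSet)
          ⟨0, measure_ne_top _ _⟩).symm
    _ ≤ μ {ω | ∑' k, f k ω ≤ x} := measure_mono_ae hsub

theorem exp_neg_le_mgf_sum_range_mul_of_iIndepFun {χ : ℕ → Ω → ℝ}
    (hmeas : ∀ k, Measurable (χ k)) (hindep : iIndepFun χ μ)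
    (hlaw : ∀ k, μ.map (χ k) = (gaussianReal 0 1).map (· ^ 2))
    {lam : ℕ → ℝ} (hlam : ∀ k, 0 ≤ lam k) {α t : ℝ} (hα : 1 ≤ α) (ht : 0 ≤ t) (n : ℕ) :
    exp (-(α / 2 * (2 * t) ^ (1 / α) * ∑ k ∈ Finset.range n, lam k ^ (1 / α)))
      ≤ mgf (fun ω => ∑ k ∈ Finset.range n, lam k * χ k ω) μ (-t) := by
  have hterm (k : ℕ) : exp (-(α / 2 * (2 * t) ^ (1 / α) * lam k ^ (1 / α)))
      ≤ mgf (fun ω => lam k * χ k ω) μ (-t) := by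
    have hu : 0 ≤ 2 * t * lam k := by have := hlam k; positivity
    rw [mgf_const_mul, show lam k * -t = -(2 * t * lam k / 2) by ring,
      mgf_neg_of_map_eq_map_sq_gaussianReal (hmeas k).aemeasurable (hlaw k),
      mul_div_cancel₀ _ two_ne_zero]
    calc exp (-(α / 2 * (2 * t) ^ (1 / α) * lam k ^ (1 / α)))
        = exp (-(α / 2 * (2 * t * lam k) ^ (1 / α))) := by
          rw [mul_rpow (by positivity) (hlam k), mul_assoc]
      _ ≤ (√(1 + 2 * t * lam k))⁻¹ := exp_neg_le_inv_sqrt_one_add hα hu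
  have hsum : mgf (fun ω => ∑ k ∈ Finset.range n, lam k * χ k ω) μ (-t)
      = ∏ k ∈ Finset.range n, mgf (fun ω => lam k * χ k ω) μ (-t) := by
    have hX : iIndepFun (fun k ω => lam k * χ k ω) μ :=
      hindep.comp (fun k y => lam k * y) fun k => measurable_const_mul _
    rw [← hX.mgf_sum (fun k => (hmeas k).const_mul _)]
    simp only [Finset.sum_fn]
  rw [hsum, Finset.mul_sum, ← Finset.sum_neg_distrib, exp_sum]
  exact Finset.prod_le_prod (fun k _ => (exp_pos _).le) fun k _ => hterm k

theorem exp_neg_sub_exp_neg_le_measureReal_tsum_mul_le [IsProbabilityMeasure μ]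
    {χ : ℕ → Ω → ℝ} (hmeas : ∀ k, Measurable (χ k)) (hindep : iIndepFun χ μ)
    (hlaw : ∀ k, μ.map (χ k) = (gaussianReal 0 1).map (· ^ 2))
    {lam : ℕ → ℝ} (hlam : ∀ k, 0 ≤ lam k) {α t : ℝ} (hα : 1 ≤ α) (ht : 0 ≤ t)
    (hsum : Summable fun k => lam k ^ (1 / α)) (x : ℝ) :
    exp (-(α / 2 * (2 * t) ^ (1 / α) * ∑' k, lam k ^ (1 / α))) - exp (-(t * x))
      ≤ μ.real {ω | ∑' k, lam k * χ k ω ≤ x} := by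
  have hX0 : ∀ᵐ ω ∂μ, ∀ k, 0 ≤ lam k * χ k ω := ae_all_iff.2 fun k =>
    (ae_nonneg_of_map_eq_map_sq_gaussianReal (hmeas k).aemeasurable (hlaw k)).mono
      fun ω hω => mul_nonneg (hlam k) hω
  have hpartial (n : ℕ) :
      ENNReal.ofReal (exp (-(α / 2 * (2 * t) ^ (1 / α) * ∑' k, lam k ^ (1 / α)))
        - exp (-(t * x))) ≤ μ {ω | ∑ k ∈ Finset.range n, lam k * χ k ω ≤ x} := by
    rw [ENNReal.ofReal_le_iff_le_toReal (measure_ne_top _ _)]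
    have hS : ∑ k ∈ Finset.range n, lam k ^ (1 / α) ≤ ∑' k, lam k ^ (1 / α) :=
      hsum.sum_le_tsum _ fun k _ => rpow_nonneg (hlam k) _
    have hmono : exp (-(α / 2 * (2 * t) ^ (1 / α) * ∑' k, lam k ^ (1 / α)))
        ≤ exp (-(α / 2 * (2 * t) ^ (1 / α) * ∑ k ∈ Finset.range n, lam k ^ (1 / α))) := by
      gcongr
    have hlow := exp_neg_le_mgf_sum_range_mul_of_iIndepFun hmeas hindep hlaw hlam hα ht n
    have hup := mgf_neg_le_measureReal_le_add_exp
      (Finset.measurable_sum (Finset.range n) fun k _ => (hmeas k).const_mul (lam k))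
      (hX0.mono fun ω hω => Finset.sum_nonneg fun k _ => hω k) ht x
    rw [Measure.real] at hup
    linarith
  exact (ENNReal.ofReal_le_iff_le_toReal (measure_ne_top _ _)).1
    (le_measure_tsum_le_of_le_measure_sum_range_le (fun k => (hmeas k).const_mul (lam k))
      hX0 hpartial)

end

theorem eq_two_rpow_two_sub_mul {α S b c d : ℝ} (hα : 1 < α) (hS : 0 < S)
    (hb : b = α * 2 ^ (1 / α - 1) * S) (hc : c = 2 ^ α * b ^ (α / (α - 1)))
    (hd : d = α * (2 * c) ^ (1 / α) * S) :
    d = 2 ^ (2 - α) * c := by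
  have hb0 : 0 < b := by rw [hb]; positivity
  have hc0 : 0 < c := by rw [hc]; positivity
  have hd0 : 0 < d := by rw [hd]; positivity
  have hlb : log b = log α + (1 / α - 1) * log 2 + log S := by
    rw [hb, log_mul (by positivity) hS.ne', log_mul (by positivity) (by positivity),
      log_rpow two_pos]
  have hlc : log c = α * log 2 + α / (α - 1) * log b := by
    rw [hc, log_mul (by positivity) (by positivity), log_rpow two_pos, log_rpow hb0]
  have hld : log d = log α + 1 / α * (log 2 + log c) + log S := by
    rw [hd, log_mul (by positivity) hS.ne', log_mul (by positivity) (by positivity),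
      log_rpow (by positivity), log_mul two_ne_zero hc0.ne']
  refine log_injOn_pos hd0 (Set.mem_Ioi.2 (by positivity)) ?_
  rw [log_mul (by positivity) hc0.ne', log_rpow two_pos, hld, hlc, hlb]
  have : α - 1 ≠ 0 := by linarith
  field_simp
  ring

theorem exists_quarter_mul_exp_neg_le_chernoff_bound {α S c d : ℝ} (hα : 1 < α) (hc : 0 ≤ c)
    (hS : 0 ≤ S) (hd : d = α * (2 * c) ^ (1 / α) * S) (hdc : d < 2 * c) :
    ∃ x₀ > 0, ∀ x : ℝ, 0 < x → x ≤ x₀ →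
      1 / 4 * exp (-d * x ^ (-1 / (α - 1))) ≤
        exp (-(α / 2 * (2 * (c * x ^ (-α / (α - 1)))) ^ (1 / α) * S))
          - exp (-(c * x ^ (-α / (α - 1)) * x)) := by
  have hα1 : 0 < α - 1 := by linarith
  have hlarge : ∀ᶠ x in 𝓝[>] 0, log 2 / (c - d / 2) ≤ x ^ (-1 / (α - 1)) :=
    (tendsto_rpow_neg_nhdsGT_zero (div_neg_of_neg_of_pos neg_one_lt_zero hα1)).eventually_ge_atTop _
  obtain ⟨x₀, hx₀, hsub⟩ := mem_nhdsGT_iff_exists_Ioc_subset.1 hlarge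
  refine ⟨x₀, hx₀, fun x hx hxx₀ => ?_⟩
  set A := x ^ (-1 / (α - 1))
  have hA : log 2 ≤ (c - d / 2) * A := (div_le_iff₀' (by linarith)).1 (hsub ⟨hx, hxx₀⟩)
  have htx : c * x ^ (-α / (α - 1)) * x = c * A := by
    rw [mul_assoc, ← rpow_add_one hx.ne']
    congr 2
    field_simp
    ring
  have h2t : (2 * (c * x ^ (-α / (α - 1)))) ^ (1 / α) = (2 * c) ^ (1 / α) * A := by
    rw [← mul_assoc, mul_rpow (by positivity) (by positivity), ← rpow_mul hx.le]
    congr 2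
    field_simp
  have hd0 : 0 ≤ d := by rw [hd]; positivity
  rw [htx, h2t, show α / 2 * ((2 * c) ^ (1 / α) * A) * S = d / 2 * A by rw [hd]; ring]
  calc 1 / 4 * exp (-d * A) = 1 / 4 * exp (-(2 * (d / 2 * A))) := by ring_nf
    _ ≤ _ := quarter_mul_exp_neg_two_mul_le (by positivity) (by linarith)

theorem left_tail_lower_bound_weighted_chi_squared_general
    {Ω : Type*} [MeasureSpace Ω] [IsProbabilityMeasure (ℙ : Measure Ω)]
    (χ : ℕ → Ω → ℝ) (hmeas : ∀ k, Measurable (χ k))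
    (hindep : iIndepFun χ ℙ)
    (hlaw : ∀ k, Measure.map (χ k) ℙ
      = Measure.map (fun u : ℝ => u ^ 2) (gaussianReal 0 1))
    (lam : ℕ → ℝ) (hnonneg : ∀ k, 0 ≤ lam k)
    (α : ℝ) (hα : 1 < α)
    (hsum : Summable (fun k => lam k ^ (1 / α)))
    (S b c d : ℝ)
    (hS : S = ∑' k, lam k ^ (1 / α))
    (hb : b = α * 2 ^ (1 / α - 1) * S)
    (hc : c = 2 ^ α * b ^ (α / (α - 1)))
    (hd : d = α * (2 * c) ^ (1 / α) * S) :
    ∃ x₀ > (0 : ℝ), ∀ x : ℝ, 0 < x → x ≤ x₀ →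
      (1 / 4) * Real.exp (-d * x ^ (-1 / (α - 1)))
        ≤ (ℙ {ω | (∑' k, lam k * χ k ω) ≤ x}).toReal := by
  have hSnn : 0 ≤ S := hS ▸ tsum_nonneg fun k => rpow_nonneg (hnonneg k) _
  rcases hSnn.eq_or_lt with hS0 | hSpos
  · have hlam (k : ℕ) : lam k = 0 := by
      have hk := hsum.le_tsum k fun j _ => rpow_nonneg (hnonneg j) _
      rw [← hS, ← hS0] at hk
      exact (rpow_eq_zero (hnonneg k) (by positivity)).1 (hk.antisymm (rpow_nonneg (hnonneg k) _))
    refine ⟨1, one_pos, fun x hx _ => ?_⟩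
    norm_num [hlam, hd, ← hS0, hx.le]
  have hc0 : 0 < c := by rw [hc, hb]; positivity
  have hdc : d < 2 * c := by
    rw [eq_two_rpow_two_sub_mul hα hSpos hb hc hd]
    have : (2 : ℝ) ^ (2 - α) < 2 ^ (1 : ℝ) := rpow_lt_rpow_of_exponent_lt one_lt_two (by linarith)
    nlinarith [rpow_one (2 : ℝ)]
  obtain ⟨x₀, hx₀, hbound⟩ :=
    exists_quarter_mul_exp_neg_le_chernoff_bound hα hc0.le hSnn hd hdc
  refine ⟨x₀, hx₀, fun x hx hxx₀ => (hbound x hx hxx₀).trans ?_⟩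
  rw [hS]
  exact exp_neg_sub_exp_neg_le_measureReal_tsum_mul_le hmeas hindep hlaw hnonneg hα.le
    (by positivity) hsum x

/-- lower bound on the left tail of `W_∞ = Σₖ λₖ χₖ²`, where the
`χₖ²` are i.i.d. chi-squared random variables with one degree of freedom (i.e.
squares of standard normals) and `(λₖ)` is nonincreasing, nonnegative, with
`Σₖ λₖ^{1/α} < ∞` for some `α > 1`. With `b = α·2^{1/α−1}·Σₖ λₖ^{1/α}`,
`c = 2^α·b^{α/(α−1)}` and `d = α·(2c)^{1/α}·Σₖ λₖ^{1/α}`, there exists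
`x₀ > 0` such that `P(W_∞ ≤ x) ≥ (1/4)·exp(−d·x^{−1/(α−1)})` for all
`0 < x ≤ x₀`. -/
theorem left_tail_lower_bound_weighted_chi_squared
    {Ω : Type*} [MeasureSpace Ω] [IsProbabilityMeasure (ℙ : Measure Ω)]
    (χ : ℕ → Ω → ℝ) (hmeas : ∀ k, Measurable (χ k))
    (hindep : iIndepFun χ ℙ)
    (hlaw : ∀ k, Measure.map (χ k) ℙ
      = Measure.map (fun u : ℝ => u ^ 2) (gaussianReal 0 1))
    (lam : ℕ → ℝ) (hanti : Antitone lam) (hnonneg : ∀ k, 0 ≤ lam k)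
    (α : ℝ) (hα : 1 < α)
    (hsum : Summable (fun k => lam k ^ (1 / α)))
    (S b c d : ℝ)
    (hS : S = ∑' k, lam k ^ (1 / α))
    (hb : b = α * 2 ^ (1 / α - 1) * S)
    (hc : c = 2 ^ α * b ^ (α / (α - 1)))
    (hd : d = α * (2 * c) ^ (1 / α) * S) :
    ∃ x₀ > (0 : ℝ), ∀ x : ℝ, 0 < x → x ≤ x₀ →
      (1 / 4) * Real.exp (-d * x ^ (-1 / (α - 1)))
        ≤ (ℙ {ω | (∑' k, lam k * χ k ω) ≤ x}).toReal :=
  left_tail_lower_bound_weighted_chi_squared_general χ hmeas hindep hlaw lam hnonneg α hα hsum S b c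
    d hS hb hc hd
end
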